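/- arXiv:1908.03969 — 5 statements merged into one kernel-verified Lean document; each statement's English description precedes it below -/
import Mathlib

section
/- Let h : ℕ → ℂ be a multiplicative arithmetic function (h(1) = 1 and h(mn) = h(m)h(n) whenever gcd(m,n) = 1) satisfying, for all primes p and all positive integers k: (1) there is a real M ≥ 1 with |h(p^k)| ≤ M; (2) there is a positive integer K with h(p^k) = 0 for all k > K; and (3) h(p) = 0. Then for every real σ > (K−1)/K, the series ∑_{n≥1} |h(n)|/n^σ converges. -/
/-!
Multiplicativity and `h(p) = 0` confine the support of `h` to powerful numbers, on which
`|h(n)| ≤ M ^ ω(n) = O(n ^ ε)` for every `ε > 0`. Splitting each exponent `e ≥ 2` as `2a + 3b`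
writes a powerful number injectively as `a² b³`, so `∑_{n powerful} n ^ (-s)` is dominated by
`∑ a ^ (-2s) b ^ (-3s)`, finite for `s > 1/2`. For `K ≥ 2` we have `σ > (K - 1)/K ≥ 1/2`; for
`K ≤ 1` all `h(p^k)` with `k > 0` vanish and `h` is supported on `{1}`.
-/

open Finset Filter

namespace Nat

def Powerful (n : ℕ) : Prop := n ≠ 0 ∧ ∀ p ∈ n.primeFactors, 2 ≤ n.factorization p

-- An exponent `e ≥ 2` splits as `2 * (e / 2 - e % 2) + 3 * (e % 2)`.
def sqFactor (n : ℕ) : ℕ :=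
  ∏ p ∈ n.primeFactors, p ^ (n.factorization p / 2 - n.factorization p % 2)

def cubeFactor (n : ℕ) : ℕ := ∏ p ∈ n.primeFactors, p ^ (n.factorization p % 2)

theorem Powerful.sqFactor_sq_mul_cubeFactor_cube {n : ℕ} (hn : n.Powerful) :
    sqFactor n ^ 2 * cubeFactor n ^ 3 = n := by
  have hexp : ∀ p ∈ n.primeFactors, (p ^ (n.factorization p / 2 - n.factorization p % 2)) ^ 2 *
      (p ^ (n.factorization p % 2)) ^ 3 = p ^ n.factorization p := by
    intro p hp
    rw [← pow_mul, ← pow_mul, ← pow_add]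
    have he := hn.2 p hp
    congr 1
    omega
  rw [sqFactor, cubeFactor, ← prod_pow, ← prod_pow, ← prod_mul_distrib, prod_congr rfl hexp]
  exact Nat.prod_factorization_pow_eq_self hn.1

theorem injOn_sqFactor_cubeFactor :
    Set.InjOn (fun n => (sqFactor n, cubeFactor n)) {n | n.Powerful} := by
  intro m hm n hn hmn
  simp only [Prod.mk.injEq] at hmn
  rw [← hm.sqFactor_sq_mul_cubeFactor_cube, ← hn.sqFactor_sq_mul_cubeFactor_cube, hmn.1, hmn.2]

theorem summable_indicator_powerful_rpow_neg {s : ℝ} (hs : 1 / 2 < s) :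
    Summable ({n : ℕ | n.Powerful}.indicator fun n => (n : ℝ) ^ (-s)) := by
  have hpairs : Summable fun ab : ℕ × ℕ => (ab.1 : ℝ) ^ (-(2 * s)) * (ab.2 : ℝ) ^ (-(3 * s)) :=
    .mul_of_nonneg (Real.summable_nat_rpow.mpr (by linarith))
      (Real.summable_nat_rpow.mpr (by linarith)) (fun _ => by positivity) (fun _ => by positivity)
  rw [← summable_subtype_iff_indicator]
  refine (hpairs.comp_injective injOn_sqFactor_cubeFactor.injective).congr fun ⟨n, hn⟩ => ?_
  have hcast : (n : ℝ) = (sqFactor n : ℝ) ^ 2 * (cubeFactor n : ℝ) ^ 3 := by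
    exact_mod_cast (Powerful.sqFactor_sq_mul_cubeFactor_cube hn).symm
  simp only [Function.comp_apply, Set.domRestrict_apply]
  rw [hcast, Real.mul_rpow (by positivity) (by positivity), ← Real.rpow_natCast,
    ← Real.rpow_natCast (cubeFactor n : ℝ), ← Real.rpow_mul (by positivity),
    ← Real.rpow_mul (by positivity)]
  norm_num

theorem exists_pow_card_primeFactors_le_mul_rpow {M ε : ℝ} (hM : 1 ≤ M) (hε : 0 < ε) :
    ∃ C : ℝ, ∀ n : ℕ, n ≠ 0 → M ^ n.primeFactors.card ≤ C * (n : ℝ) ^ ε := by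
  obtain ⟨N, hN⟩ : ∃ N : ℕ, ∀ p ≥ N, M ≤ (p : ℝ) ^ ε := eventually_atTop.mp
    (((tendsto_rpow_atTop hε).comp tendsto_natCast_atTop_atTop).eventually_ge_atTop M)
  refine ⟨M ^ N, fun n hn => ?_⟩
  set P := n.primeFactors
  have hsmall : M ^ #{p ∈ P | p < N} ≤ M ^ N := by
    refine pow_le_pow_right₀ hM ((card_le_card fun p hp => ?_).trans_eq (card_range N))
    exact mem_range.mpr (mem_filter.mp hp).2
  have hlarge : M ^ #{p ∈ P | ¬p < N} ≤ (n : ℝ) ^ ε := calc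
    M ^ #{p ∈ P | ¬p < N} ≤ ∏ p ∈ P with ¬p < N, (p : ℝ) ^ ε := by
      rw [← prod_const]
      exact prod_le_prod (fun _ _ => by positivity)
        fun p hp => hN p (not_lt.mp (mem_filter.mp hp).2)
    _ = (∏ p ∈ P with ¬p < N, p : ℕ) ^ ε := by
      rw [Real.finsetProd_rpow _ _ fun _ _ => by positivity, Nat.cast_prod]
    _ ≤ (n : ℝ) ^ ε := by
      gcongr
      exact Nat.le_of_dvd (Nat.pos_of_ne_zero hn)
        ((prod_dvd_prod_of_subset _ _ _ (filter_subset _ _)).trans (prod_primeFactors_dvd n))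
  calc M ^ P.card = M ^ #{p ∈ P | p < N} * M ^ #{p ∈ P | ¬p < N} := by
        rw [← pow_add, card_filter_add_card_filter_not]
    _ ≤ M ^ N * (n : ℝ) ^ ε := mul_le_mul hsmall hlarge (by positivity) (by positivity)

section Multiplicative

variable {R : Type*} {h : ℕ → R}

theorem apply_pow_factorization_ne_zero [CommMonoidWithZero R] (h1 : h 1 = 1)
    (hmul : ∀ m n : ℕ, m.Coprime n → h (m * n) = h m * h n) {n : ℕ} (hn : n ≠ 0)
    (hhn : h n ≠ 0) {p : ℕ} (hp : p ∈ n.primeFactors) : h (p ^ n.factorization p) ≠ 0 := by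
  rw [multiplicative_factorization h hmul h1 hn] at hhn
  exact fun hp0 => hhn (prod_eq_zero hp hp0)

theorem powerful_of_apply_ne_zero [CommMonoidWithZero R] (h1 : h 1 = 1)
    (hmul : ∀ m n : ℕ, m.Coprime n → h (m * n) = h m * h n)
    (hprime : ∀ p : ℕ, p.Prime → h p = 0) {n : ℕ} (hn : n ≠ 0) (hhn : h n ≠ 0) :
    n.Powerful := by
  refine ⟨hn, fun p hp => ?_⟩
  have hpos : n.factorization p ≠ 0 := Finsupp.mem_support_iff.mp hp
  have hne_one : n.factorization p ≠ 1 := fun h_one => by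
    simpa [h_one, hprime p (prime_of_mem_primeFactors hp)] using
      apply_pow_factorization_ne_zero h1 hmul hn hhn hp
  omega

theorem factorization_le_of_apply_ne_zero [CommMonoidWithZero R] (h1 : h 1 = 1)
    (hmul : ∀ m n : ℕ, m.Coprime n → h (m * n) = h m * h n) {K : ℕ}
    (hvanish : ∀ p k : ℕ, p.Prime → 0 < k → K < k → h (p ^ k) = 0) {n : ℕ} (hn : n ≠ 0)
    (hhn : h n ≠ 0) (p : ℕ) : n.factorization p ≤ K := by
  by_cases hp : p ∈ n.primeFactors
  · by_contra! hK
    exact apply_pow_factorization_ne_zero h1 hmul hn hhn hp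
      (hvanish p _ (prime_of_mem_primeFactors hp) (by omega) hK)
  · simp [Finsupp.notMem_support_iff.mp (show p ∉ n.factorization.support from hp)]

theorem eq_one_of_apply_ne_zero [CommMonoidWithZero R] (h1 : h 1 = 1)
    (hmul : ∀ m n : ℕ, m.Coprime n → h (m * n) = h m * h n)
    (hprime : ∀ p : ℕ, p.Prime → h p = 0) {K : ℕ} (hK : K ≤ 1)
    (hvanish : ∀ p k : ℕ, p.Prime → 0 < k → K < k → h (p ^ k) = 0) {n : ℕ} (hn : n ≠ 0)
    (hhn : h n ≠ 0) : n = 1 := by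
  by_contra hn1
  obtain ⟨p, hp⟩ : n.primeFactors.Nonempty := by
    simpa [nonempty_iff_ne_empty, primeFactors_eq_empty] using ⟨hn, hn1⟩
  have := (powerful_of_apply_ne_zero h1 hmul hprime hn hhn).2 p hp
  have := factorization_le_of_apply_ne_zero h1 hmul hvanish hn hhn p
  omega

theorem norm_apply_le_pow_card_primeFactors [SeminormedCommRing R] [NormMulClass R]
    [NormOneClass R] (h1 : h 1 = 1) (hmul : ∀ m n : ℕ, m.Coprime n → h (m * n) = h m * h n)
    {M : ℝ} (hbound : ∀ p k : ℕ, p.Prime → 0 < k → ‖h (p ^ k)‖ ≤ M) {n : ℕ} (hn : n ≠ 0) :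
    ‖h n‖ ≤ M ^ n.primeFactors.card := by
  rw [multiplicative_factorization h hmul h1 hn, Finsupp.prod, norm_prod, ← prod_const]
  refine prod_le_prod (fun _ _ => norm_nonneg _) fun p hp => ?_
  exact hbound p _ (prime_of_mem_primeFactors hp)
    (Nat.pos_of_ne_zero (Finsupp.mem_support_iff.mp hp))

theorem summable_norm_div_rpow_of_apply_prime_eq_zero [SeminormedCommRing R]
    [NormMulClass R] [NormOneClass R] (h1 : h 1 = 1)
    (hmul : ∀ m n : ℕ, m.Coprime n → h (m * n) = h m * h n)
    (hprime : ∀ p : ℕ, p.Prime → h p = 0) {M : ℝ} (hM : 1 ≤ M)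
    (hbound : ∀ p k : ℕ, p.Prime → 0 < k → ‖h (p ^ k)‖ ≤ M) {σ : ℝ} (hσ : 1 / 2 < σ) :
    Summable fun n : ℕ => ‖h (n + 1)‖ / ((n : ℝ) + 1) ^ σ := by
  obtain ⟨ε, hε, hσε⟩ : ∃ ε : ℝ, 0 < ε ∧ 1 / 2 < σ - ε :=
    ⟨(σ - 1 / 2) / 2, by linarith, by linarith⟩
  obtain ⟨C, hC⟩ := exists_pow_card_primeFactors_le_mul_rpow hM hε
  have hmajorant := (summable_nat_add_iff 1).mpr
    ((summable_indicator_powerful_rpow_neg hσε).mul_left C)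
  refine hmajorant.of_nonneg_of_le (fun _ => by positivity) fun n => ?_
  have hm : n + 1 ≠ 0 := n.succ_ne_zero
  rw [show (n : ℝ) + 1 = ((n + 1 : ℕ) : ℝ) by push_cast; rfl]
  by_cases hP : (n + 1).Powerful
  · rw [Set.indicator_of_mem (show n + 1 ∈ {m : ℕ | m.Powerful} from hP)]
    have hpos : (0 : ℝ) < (n + 1 : ℕ) := by positivity
    calc ‖h (n + 1)‖ / ((n + 1 : ℕ) : ℝ) ^ σ
        ≤ C * ((n + 1 : ℕ) : ℝ) ^ ε / ((n + 1 : ℕ) : ℝ) ^ σ := by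
          gcongr
          exact (norm_apply_le_pow_card_primeFactors h1 hmul hbound hm).trans (hC _ hm)
      _ = C * ((n + 1 : ℕ) : ℝ) ^ (-(σ - ε)) := by
          rw [mul_div_assoc, ← Real.rpow_sub hpos, neg_sub]
  · have hhm : h (n + 1) = 0 :=
      by_contra fun hhm => hP (powerful_of_apply_ne_zero h1 hmul hprime hm hhm)
    simp [hhm, Set.indicator_of_notMem (show n + 1 ∉ {m : ℕ | m.Powerful} from hP)]

end Multiplicative

end Nat

theorem stmt8_general (h : ℕ → ℂ) (h1 : h 1 = 1)
    (hmul : ∀ m n : ℕ, Nat.Coprime m n → h (m * n) = h m * h n)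
    (M : ℝ) (hM : 1 ≤ M)
    (hbound : ∀ p k : ℕ, p.Prime → 0 < k → ‖h (p ^ k)‖ ≤ M)
    (K : ℕ)
    (hvanish : ∀ p k : ℕ, p.Prime → 0 < k → K < k → h (p ^ k) = 0)
    (hprime : ∀ p : ℕ, p.Prime → h p = 0)
    (σ : ℝ) (hσ : ((K : ℝ) - 1) / K < σ) :
    Summable (fun n : ℕ => ‖h (n + 1)‖ / ((n : ℝ) + 1) ^ σ) := by
  rcases le_or_gt K 1 with hK | hK
  · refine summable_of_ne_finset_zero (s := {0}) fun n hn => ?_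
    have hvanish_succ : h (n + 1) = 0 := by_contra fun hhn => hn <| by
      simpa using Nat.eq_one_of_apply_ne_zero h1 hmul hprime hK hvanish n.succ_ne_zero hhn
    simp [hvanish_succ]
  · have hσ_half : 1 / 2 < σ := by
      refine lt_of_le_of_lt ?_ hσ
      rw [div_le_div_iff₀ two_pos (by positivity)]
      linarith [show (2 : ℝ) ≤ K by exact_mod_cast hK]
    exact Nat.summable_norm_div_rpow_of_apply_prime_eq_zero h1 hmul hprime hM hbound hσ_half

/-- Let `h : ℕ → ℂ` be multiplicative with `|h(p^k)| ≤ M` (some `M ≥ 1`),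
`h(p^k) = 0` for `k > K` (some integer `K > 0`), and `h(p) = 0`, for all primes `p` and
positive integers `k`. Then `∑_{n ≥ 1} |h(n)|/n^σ` converges for every `σ > (K−1)/K`. -/
theorem stmt8 (h : ℕ → ℂ) (h1 : h 1 = 1)
    (hmul : ∀ m n : ℕ, Nat.Coprime m n → h (m * n) = h m * h n)
    (M : ℝ) (hM : 1 ≤ M)
    (hbound : ∀ p k : ℕ, p.Prime → 0 < k → ‖h (p ^ k)‖ ≤ M)
    (K : ℕ) (hK : 0 < K)
    (hvanish : ∀ p k : ℕ, p.Prime → 0 < k → K < k → h (p ^ k) = 0)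
    (hprime : ∀ p : ℕ, p.Prime → h p = 0)
    (σ : ℝ) (hσ : ((K : ℝ) - 1) / K < σ) :
    Summable (fun n : ℕ => ‖h (n + 1)‖ / ((n : ℝ) + 1) ^ σ) :=
  stmt8_general h h1 hmul M hM hbound K hvanish hprime σ hσ
end

section
/- Suppose 0 < x₁ < y₁ < 1, 0 < x₂ < y₂ < 1 are real numbers, g is a 3×3 integer matrix with determinant ±1, and λ > 0 is a real number such that g · G_oI(x₁, y₁) · gᵀ = λ · G_oI(x₂, y₂) (matrix product over ℝ). Then x₁ = x₂, y₁ = y₂, and λ = 1. -/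
/-!
`GoI x y` is the Gram matrix of the body-centred orthorhombic lattice with edges `x < y < 1`.
Its minimum is `x²`, attained only on the x-edge line, if `x² < (x² + y² + 1) / 4`, and otherwise
`(x² + y² + 1) / 4`, attained at the half body diagonals, among them the basis vectors `e₀, e₂`.
A unimodular `g` with `g G₁ gᵀ = λ G₂` scales minima by `λ` and determinants by `λ³`. It cannot
relate lattices of the two kinds, since it would map the independent vectors `e₀, e₂` into one
line. If both minima are x-edges, `g` preserves the x-edge line, hence its orthogonal plane, whose
minimum is `y²`. If both are half diagonals, `x²` scales by `λ` as well: directly when `x²` is also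
minimal, and otherwise because `g` then preserves parity, hence the even sublattice, whose minimum
is `x²`. Either way the determinant forces `λ = 1`.
-/

open Matrix

/-- The Gram matrix `G_oI(x, y)` of a body-centered orthorhombic lattice. -/
noncomputable def GoI (x y : ℝ) : Matrix (Fin 3) (Fin 3) ℝ :=
  !![(x ^ 2 + y ^ 2 + 1) / 4, (-x ^ 2 + y ^ 2 - 1) / 4, (x ^ 2 - y ^ 2 - 1) / 4;
     (-x ^ 2 + y ^ 2 - 1) / 4, (x ^ 2 + y ^ 2 + 1) / 4, (-x ^ 2 - y ^ 2 + 1) / 4;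
     (x ^ 2 - y ^ 2 - 1) / 4, (-x ^ 2 - y ^ 2 + 1) / 4, (x ^ 2 + y ^ 2 + 1) / 4]

section ScaledCongr

variable {n : Type*} [Fintype n] [DecidableEq n]

noncomputable def latticeForm (G : Matrix n n ℝ) (u v : n → ℤ) : ℝ :=
  (Int.cast ∘ u) ⬝ᵥ G *ᵥ (Int.cast ∘ v)

def IsScaledCongr (g : Matrix n n ℤ) (lam : ℝ) (G₁ G₂ : Matrix n n ℝ) : Prop :=
  IsUnit g.det ∧ g.map (Int.cast : ℤ → ℝ) * G₁ * (g.map Int.cast)ᵀ = lam • G₂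

namespace IsScaledCongr

variable {g : Matrix n n ℤ} {lam : ℝ} {G₁ G₂ : Matrix n n ℝ}

theorem latticeForm_vecMul (h : IsScaledCongr g lam G₁ G₂) (u v : n → ℤ) :
    latticeForm G₁ (u ᵥ* g) (v ᵥ* g) = lam * latticeForm G₂ u v := by
  have hcast (w : n → ℤ) : Int.cast ∘ (w ᵥ* g) = (Int.cast ∘ w) ᵥ* g.map (Int.cast : ℤ → ℝ) :=
    funext (RingHom.map_vecMul (Int.castRingHom ℝ) g w)
  rw [latticeForm, latticeForm, hcast, hcast]
  set A := g.map (Int.cast : ℤ → ℝ)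
  calc (Int.cast ∘ u) ᵥ* A ⬝ᵥ G₁ *ᵥ ((Int.cast ∘ v) ᵥ* A)
      = (Int.cast ∘ u) ⬝ᵥ (A * G₁ * Aᵀ) *ᵥ (Int.cast ∘ v) := by
        rw [← mulVec_mulVec, ← mulVec_mulVec, mulVec_transpose, dotProduct_mulVec _ A]
    _ = _ := by rw [h.2, smul_mulVec, dotProduct_smul, smul_eq_mul]

theorem symm (h : IsScaledCongr g lam G₁ G₂) (hlam : lam ≠ 0) :
    IsScaledCongr g⁻¹ lam⁻¹ G₂ G₁ := by
  refine ⟨isUnit_nonsing_inv_det g h.1, ?_⟩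
  have hinv : g⁻¹.map (Int.cast : ℤ → ℝ) * g.map Int.cast = 1 := by
    simpa [nonsing_inv_mul g h.1] using ((Int.castRingHom ℝ).mapMatrix.map_mul g⁻¹ g).symm
  calc g⁻¹.map (Int.cast : ℤ → ℝ) * G₂ * (g⁻¹.map Int.cast)ᵀ
      = lam⁻¹ • (g⁻¹.map (Int.cast : ℤ → ℝ) * (lam • G₂) * (g⁻¹.map Int.cast)ᵀ) := by
        simp [smul_smul, hlam]
    _ = lam⁻¹ • G₁ := by
        rw [← h.2, ← mul_assoc, ← mul_assoc, hinv, one_mul, mul_assoc, ← transpose_mul, hinv,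
          transpose_one, mul_one]

theorem det_eq (h : IsScaledCongr g lam G₁ G₂) : G₁.det = lam ^ Fintype.card n * G₂.det := by
  have hg : (g.map (Int.cast : ℤ → ℝ)).det * (g.map Int.cast).det = 1 := by
    rw [← Int.cast_det, ← Int.cast_mul, Int.isUnit_mul_self h.1, Int.cast_one]
  rw [← det_smul, ← h.2, det_mul, det_mul, det_transpose, mul_right_comm, hg, one_mul]

theorem vecMul_injective (h : IsScaledCongr g lam G₁ G₂) : Function.Injective (· ᵥ* g) :=
  fun u v huv => by simpa [vecMul_vecMul, mul_nonsing_inv g h.1] using congrArg (· ᵥ* g⁻¹) huv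

theorem vecMul_ne_zero (h : IsScaledCongr g lam G₁ G₂) {u : n → ℤ} (hu : u ≠ 0) : u ᵥ* g ≠ 0 :=
  fun h0 => hu (h.vecMul_injective (h0.trans (zero_vecMul g).symm))

theorem min_eq (h : IsScaledCongr g lam G₁ G₂) (hlam : 0 < lam) {m₁ m₂ : ℝ}
    (h₁ : IsLeast {r | ∃ u ≠ 0, latticeForm G₁ u u = r} m₁)
    (h₂ : IsLeast {r | ∃ u ≠ 0, latticeForm G₂ u u = r} m₂) : m₁ = lam * m₂ := by
  obtain ⟨⟨w₁, hw₁, rfl⟩, hle₁⟩ := h₁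
  obtain ⟨⟨w₂, hw₂, rfl⟩, hle₂⟩ := h₂
  have h' := h.symm hlam.ne'
  apply le_antisymm
  · exact hle₁ ⟨w₂ ᵥ* g, h.vecMul_ne_zero hw₂, h.latticeForm_vecMul w₂ w₂⟩
  · have := hle₂ ⟨w₁ ᵥ* g⁻¹, h'.vecMul_ne_zero hw₁, h'.latticeForm_vecMul w₁ w₁⟩
    rwa [le_inv_mul_iff₀ hlam] at this

end IsScaledCongr

end ScaledCongr

/-- For `bcc u = ![p, q, r]`, the vector `u` of the lattice with Gram matrix `GoI x y` is
`(p x, q y, r) / 2` in an orthonormal frame; `p`, `q`, `r` all have the parity of `∑ j, u j`. -/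
def bcc (u : Fin 3 → ℤ) : Fin 3 → ℤ :=
  ![u 0 - u 1 + u 2, u 0 + u 1 - u 2, u 0 - u 1 - u 2]

theorem exists_bcc_ne_zero {u : Fin 3 → ℤ} (hu : u ≠ 0) : ∃ i, bcc u i ≠ 0 := by
  by_contra! h
  have h0 := h 0
  have h1 := h 1
  have h2 := h 2
  simp only [bcc, Fin.isValue, cons_val_zero, cons_val_one, cons_val] at h0 h1 h2
  obtain ⟨hu0, hu1, hu2⟩ : u 0 = 0 ∧ u 1 = 0 ∧ u 2 = 0 := by
    refine ⟨?_, ?_, ?_⟩ <;> linarith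
  exact hu (funext fun i => by fin_cases i <;> simp [hu0, hu1, hu2])

theorem even_bcc_iff (u : Fin 3 → ℤ) (i : Fin 3) : Even (bcc u i) ↔ Even (∑ j, u j) := by
  fin_cases i <;> simp [bcc, Fin.sum_univ_three, parity_simps]

theorem latticeForm_GoI (x y : ℝ) (u v : Fin 3 → ℤ) :
    latticeForm (GoI x y) u v =
      ((bcc u 0 : ℝ) * bcc v 0 * x ^ 2 + (bcc u 1 : ℝ) * bcc v 1 * y ^ 2 +
        (bcc u 2 : ℝ) * bcc v 2) / 4 := by
  simp only [latticeForm, dotProduct, Function.comp_apply, mulVec, GoI, of_apply, cons_val',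
    cons_val_fin_one, Fin.sum_univ_three, Fin.isValue, cons_val_zero, cons_val_one, cons_val, bcc,
    Int.cast_add, Int.cast_sub]
  ring

theorem det_GoI (x y : ℝ) : (GoI x y).det = x ^ 2 * y ^ 2 / 4 := by
  simp only [GoI, det_fin_three, Fin.isValue, of_apply, cons_val', cons_val_zero, cons_val_fin_one,
    cons_val_one, cons_val]
  ring

theorem one_le_intCast_sq {a : ℤ} (ha : a ≠ 0) : (1 : ℝ) ≤ (a : ℝ) ^ 2 := by
  exact_mod_cast (one_le_sq_iff_one_le_abs a).2 (Int.one_le_abs ha)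

theorem four_le_intCast_sq_of_even {a : ℤ} (ha : Even a) (ha0 : a ≠ 0) : (4 : ℝ) ≤ (a : ℝ) ^ 2 := by
  obtain ⟨k, rfl⟩ := ha
  have := one_le_intCast_sq (a := k) (by omega)
  push_cast
  linarith

theorem latticeForm_GoI_self (x y : ℝ) (u : Fin 3 → ℤ) :
    latticeForm (GoI x y) u u =
      ((bcc u 0 : ℝ) ^ 2 * x ^ 2 + (bcc u 1 : ℝ) ^ 2 * y ^ 2 + (bcc u 2 : ℝ) ^ 2) / 4 := by
  rw [latticeForm_GoI]
  ring

theorem le_latticeForm_GoI_of_not_even (x y : ℝ) {u : Fin 3 → ℤ} (hu : ¬Even (∑ j, u j)) :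
    (x ^ 2 + y ^ 2 + 1) / 4 ≤ latticeForm (GoI x y) u u := by
  have h (i : Fin 3) : (1 : ℝ) ≤ (bcc u i : ℝ) ^ 2 :=
    one_le_intCast_sq fun h0 => hu ((even_bcc_iff u i).1 (h0 ▸ Even.zero))
  rw [latticeForm_GoI_self]
  nlinarith [h 0, h 1, h 2, sq_nonneg x, sq_nonneg y]

theorem sq_le_latticeForm_GoI_of_even {x y : ℝ} (hxy : x ^ 2 ≤ y ^ 2) (hy : y ^ 2 ≤ 1)
    {u : Fin 3 → ℤ} (hu : u ≠ 0) (he : Even (∑ j, u j)) : x ^ 2 ≤ latticeForm (GoI x y) u u := by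
  obtain ⟨i, hi⟩ := exists_bcc_ne_zero hu
  have h4 := four_le_intCast_sq_of_even ((even_bcc_iff u i).2 he) hi
  rw [latticeForm_GoI_self]
  fin_cases i <;> simp only [Fin.zero_eta, Fin.mk_one, Fin.reduceFinMk] at h4 <;>
    nlinarith [sq_nonneg (bcc u 0 : ℝ), sq_nonneg (bcc u 1 : ℝ), sq_nonneg (bcc u 2 : ℝ),
      sq_nonneg x, sq_nonneg y]

theorem sq_le_latticeForm_GoI_of_bcc_eq_zero {x y : ℝ} (hy : y ^ 2 ≤ 1) {u : Fin 3 → ℤ}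
    (hu : u ≠ 0) (hu0 : bcc u 0 = 0) : y ^ 2 ≤ latticeForm (GoI x y) u u := by
  have he : Even (∑ j, u j) := (even_bcc_iff u 0).1 (hu0 ▸ Even.zero)
  obtain ⟨i, hi⟩ := exists_bcc_ne_zero hu
  have h4 := four_le_intCast_sq_of_even ((even_bcc_iff u i).2 he) hi
  rw [latticeForm_GoI_self, hu0]
  fin_cases i <;> simp only [Fin.zero_eta, Fin.mk_one, Fin.reduceFinMk] at h4 hi <;>
    first
    | exact absurd hu0 hi
    | nlinarith [sq_nonneg (bcc u 1 : ℝ), sq_nonneg (bcc u 2 : ℝ), sq_nonneg y]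

theorem exists_eq_smul_of_latticeForm_GoI_eq_sq {x y : ℝ} (hxy : x ^ 2 < y ^ 2) (hy : y ^ 2 < 1)
    (hedge : x ^ 2 < (x ^ 2 + y ^ 2 + 1) / 4) {u : Fin 3 → ℤ}
    (hu : latticeForm (GoI x y) u u = x ^ 2) : ∃ a : ℤ, u = a • ![1, 0, 1] := by
  have he : Even (∑ j, u j) := by
    by_contra ho
    linarith [le_latticeForm_GoI_of_not_even x y ho]
  have hzero (i : Fin 3) (hi : i ≠ 0) : bcc u i = 0 := by
    by_contra h0
    have h4 := four_le_intCast_sq_of_even ((even_bcc_iff u i).2 he) h0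
    rw [latticeForm_GoI_self] at hu
    fin_cases i <;> simp only [Fin.zero_eta, Fin.mk_one, Fin.reduceFinMk] at h4 hi <;>
      first
      | exact hi rfl
      | nlinarith [sq_nonneg (bcc u 0 : ℝ), sq_nonneg (bcc u 1 : ℝ), sq_nonneg (bcc u 2 : ℝ),
          sq_nonneg x]
  have h1 := hzero 1 (by decide)
  have h2 := hzero 2 (by decide)
  simp only [bcc, Fin.isValue, cons_val_one, cons_val_zero, cons_val] at h1 h2
  exact ⟨u 0, funext fun i => by fin_cases i <;> simp <;> linarith⟩

theorem latticeForm_GoI_xEdge (x y : ℝ) : latticeForm (GoI x y) ![1, 0, 1] ![1, 0, 1] = x ^ 2 := by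
  norm_num [latticeForm_GoI_self, bcc, cons_val_two]

theorem latticeForm_GoI_yEdge (x y : ℝ) : latticeForm (GoI x y) ![1, 1, 0] ![1, 1, 0] = y ^ 2 := by
  norm_num [latticeForm_GoI_self, bcc, cons_val_two]

theorem latticeForm_GoI_basis₀ (x y : ℝ) :
    latticeForm (GoI x y) ![1, 0, 0] ![1, 0, 0] = (x ^ 2 + y ^ 2 + 1) / 4 := by
  norm_num [latticeForm_GoI_self, bcc, cons_val_two]

theorem latticeForm_GoI_basis₂ (x y : ℝ) :
    latticeForm (GoI x y) ![0, 0, 1] ![0, 0, 1] = (x ^ 2 + y ^ 2 + 1) / 4 := by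
  norm_num [latticeForm_GoI_self, bcc, cons_val_two]

theorem isLeast_latticeForm_GoI {x y : ℝ} (hxy : x ^ 2 ≤ y ^ 2) (hy : y ^ 2 ≤ 1) :
    IsLeast {r | ∃ u ≠ 0, latticeForm (GoI x y) u u = r}
      (min (x ^ 2) ((x ^ 2 + y ^ 2 + 1) / 4)) := by
  refine ⟨?_, ?_⟩
  · rcases min_choice (x ^ 2) ((x ^ 2 + y ^ 2 + 1) / 4) with h | h <;> rw [h]
    · exact ⟨![1, 0, 1], by decide, latticeForm_GoI_xEdge x y⟩
    · exact ⟨![1, 0, 0], by decide, latticeForm_GoI_basis₀ x y⟩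
  · rintro _ ⟨u, hu, rfl⟩
    by_cases he : Even (∑ j, u j)
    · exact (min_le_left _ _).trans (sq_le_latticeForm_GoI_of_even hxy hy hu he)
    · exact (min_le_right _ _).trans (le_latticeForm_GoI_of_not_even x y he)

theorem not_isScaledCongr_GoI_of_lt_of_le {x₁ y₁ x₂ y₂ lam : ℝ} {g : Matrix (Fin 3) (Fin 3) ℤ}
    (hlam : 0 < lam) (hxy₁ : x₁ ^ 2 < y₁ ^ 2) (hy₁ : y₁ ^ 2 < 1)
    (hedge₁ : x₁ ^ 2 < (x₁ ^ 2 + y₁ ^ 2 + 1) / 4) (hxy₂ : x₂ ^ 2 ≤ y₂ ^ 2) (hy₂ : y₂ ^ 2 ≤ 1)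
    (hdiag₂ : (x₂ ^ 2 + y₂ ^ 2 + 1) / 4 ≤ x₂ ^ 2) :
    ¬IsScaledCongr g lam (GoI x₁ y₁) (GoI x₂ y₂) := by
  intro h
  have hm := h.min_eq hlam (isLeast_latticeForm_GoI hxy₁.le hy₁.le)
    (isLeast_latticeForm_GoI hxy₂ hy₂)
  rw [min_eq_left hedge₁.le, min_eq_right hdiag₂] at hm
  have hline (e : Fin 3 → ℤ) (he : latticeForm (GoI x₂ y₂) e e = (x₂ ^ 2 + y₂ ^ 2 + 1) / 4) :
      ∃ a : ℤ, e ᵥ* g = a • ![1, 0, 1] :=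
    exists_eq_smul_of_latticeForm_GoI_eq_sq hxy₁ hy₁ hedge₁
      (by rw [h.latticeForm_vecMul, he, hm])
  obtain ⟨a, ha⟩ := hline ![1, 0, 0] (latticeForm_GoI_basis₀ x₂ y₂)
  obtain ⟨b, hb⟩ := hline ![0, 0, 1] (latticeForm_GoI_basis₂ x₂ y₂)
  have hb0 : b ≠ 0 := by
    rintro rfl
    exact h.vecMul_ne_zero (by decide) (hb.trans (zero_smul _ _))
  have hdep : b • (![1, 0, 0] : Fin 3 → ℤ) = a • ![0, 0, 1] := h.vecMul_injective <| by
    simp only [smul_vecMul, ha, hb, smul_smul, mul_comm]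
  exact hb0 (by simpa using congrFun hdep 0)

namespace IsScaledCongr

variable {x₁ y₁ x₂ y₂ lam : ℝ} {g : Matrix (Fin 3) (Fin 3) ℤ}

theorem GoI_y_sq_le_of_lt (h : IsScaledCongr g lam (GoI x₁ y₁) (GoI x₂ y₂)) (hlam : 0 < lam)
    (hx₁ : x₁ ≠ 0) (hxy₁ : x₁ ^ 2 < y₁ ^ 2) (hy₁ : y₁ ^ 2 < 1)
    (hedge₁ : x₁ ^ 2 < (x₁ ^ 2 + y₁ ^ 2 + 1) / 4) (hxy₂ : x₂ ^ 2 ≤ y₂ ^ 2) (hy₂ : y₂ ^ 2 ≤ 1)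
    (hedge₂ : x₂ ^ 2 ≤ (x₂ ^ 2 + y₂ ^ 2 + 1) / 4) : y₁ ^ 2 ≤ lam * y₂ ^ 2 := by
  have hm := h.min_eq hlam (isLeast_latticeForm_GoI hxy₁.le hy₁.le)
    (isLeast_latticeForm_GoI hxy₂ hy₂)
  rw [min_eq_left hedge₁.le, min_eq_left hedge₂] at hm
  obtain ⟨a, ha⟩ := exists_eq_smul_of_latticeForm_GoI_eq_sq hxy₁ hy₁ hedge₁
    (u := ![1, 0, 1] ᵥ* g) (by rw [h.latticeForm_vecMul, latticeForm_GoI_xEdge, hm])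
  have ha0 : a ≠ 0 := by
    rintro rfl
    exact h.vecMul_ne_zero (by decide) (ha.trans (zero_smul _ _))
  -- `![1, 1, 0]` is orthogonal to the x-edge `![1, 0, 1]`, whose image is again an x-edge.
  have hv : bcc (![1, 1, 0] ᵥ* g) 0 = 0 := by
    have h0 := h.latticeForm_vecMul ![1, 1, 0] ![1, 0, 1]
    rw [ha] at h0
    exact_mod_cast (by simpa [latticeForm_GoI, bcc, ha0, hx₁] using h0 :
      (bcc (![1, 1, 0] ᵥ* g) 0 : ℝ) = 0)
  calc y₁ ^ 2 ≤ latticeForm (GoI x₁ y₁) (![1, 1, 0] ᵥ* g) (![1, 1, 0] ᵥ* g) :=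
        sq_le_latticeForm_GoI_of_bcc_eq_zero hy₁.le (h.vecMul_ne_zero (by decide)) hv
    _ = lam * y₂ ^ 2 := by rw [h.latticeForm_vecMul, latticeForm_GoI_yEdge]

theorem GoI_x_sq_le_of_le (h : IsScaledCongr g lam (GoI x₁ y₁) (GoI x₂ y₂)) (hlam : 0 < lam)
    (hxy₁ : x₁ ^ 2 ≤ y₁ ^ 2) (hy₁ : y₁ ^ 2 ≤ 1) (hdiag₁ : (x₁ ^ 2 + y₁ ^ 2 + 1) / 4 ≤ x₁ ^ 2)
    (hxy₂ : x₂ ^ 2 ≤ y₂ ^ 2) (hy₂ : y₂ ^ 2 ≤ 1) (hdiag₂ : (x₂ ^ 2 + y₂ ^ 2 + 1) / 4 ≤ x₂ ^ 2) :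
    x₁ ^ 2 ≤ lam * x₂ ^ 2 := by
  have hm := h.min_eq hlam (isLeast_latticeForm_GoI hxy₁ hy₁) (isLeast_latticeForm_GoI hxy₂ hy₂)
  rw [min_eq_right hdiag₁, min_eq_right hdiag₂] at hm
  rcases hdiag₁.eq_or_lt with hmin₁ | hlt₁
  · calc x₁ ^ 2 = lam * ((x₂ ^ 2 + y₂ ^ 2 + 1) / 4) := hmin₁ ▸ hm
      _ ≤ lam * x₂ ^ 2 := by gcongr
  -- Now only odd vectors are shortest in the first lattice, so `g` preserves parity.
  have hodd (e : Fin 3 → ℤ) (he0 : e ≠ 0)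
      (he : latticeForm (GoI x₂ y₂) e e = (x₂ ^ 2 + y₂ ^ 2 + 1) / 4) :
      Odd (∑ j, (e ᵥ* g) j) := by
    rw [← Int.not_even_iff_odd]
    intro heven
    have := sq_le_latticeForm_GoI_of_even hxy₁ hy₁ (h.vecMul_ne_zero he0) heven
    rw [h.latticeForm_vecMul, he, ← hm] at this
    linarith
  have heven : Even (∑ j, (![1, 0, 1] ᵥ* g) j) := by
    rw [show (![1, 0, 1] : Fin 3 → ℤ) = ![1, 0, 0] + ![0, 0, 1] by decide, add_vecMul]
    simp only [Pi.add_apply, Finset.sum_add_distrib]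
    exact (hodd _ (by decide) (latticeForm_GoI_basis₀ x₂ y₂)).add_odd
      (hodd _ (by decide) (latticeForm_GoI_basis₂ x₂ y₂))
  calc x₁ ^ 2 ≤ latticeForm (GoI x₁ y₁) (![1, 0, 1] ᵥ* g) (![1, 0, 1] ᵥ* g) :=
        sq_le_latticeForm_GoI_of_even hxy₁ hy₁ (h.vecMul_ne_zero (by decide)) heven
    _ = lam * x₂ ^ 2 := by rw [h.latticeForm_vecMul, latticeForm_GoI_xEdge]

theorem GoI_eq_of_lt (h : IsScaledCongr g lam (GoI x₁ y₁) (GoI x₂ y₂)) (hlam : 0 < lam)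
    (hx₁ : x₁ ≠ 0) (hxy₁ : x₁ ^ 2 < y₁ ^ 2) (hy₁ : y₁ ^ 2 < 1)
    (hedge₁ : x₁ ^ 2 < (x₁ ^ 2 + y₁ ^ 2 + 1) / 4) (hx₂ : x₂ ≠ 0) (hxy₂ : x₂ ^ 2 < y₂ ^ 2)
    (hy₂ : y₂ ^ 2 < 1) (hedge₂ : x₂ ^ 2 < (x₂ ^ 2 + y₂ ^ 2 + 1) / 4) :
    lam = 1 ∧ x₁ ^ 2 = x₂ ^ 2 ∧ y₁ ^ 2 = y₂ ^ 2 := by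
  have hx : x₁ ^ 2 = lam * x₂ ^ 2 := by
    have hm := h.min_eq hlam (isLeast_latticeForm_GoI hxy₁.le hy₁.le)
      (isLeast_latticeForm_GoI hxy₂.le hy₂.le)
    rwa [min_eq_left hedge₁.le, min_eq_left hedge₂.le] at hm
  have hy : y₁ ^ 2 = lam * y₂ ^ 2 := by
    refine le_antisymm
      (h.GoI_y_sq_le_of_lt hlam hx₁ hxy₁ hy₁ hedge₁ hxy₂.le hy₂.le hedge₂.le) ?_
    have := (h.symm hlam.ne').GoI_y_sq_le_of_lt (inv_pos.2 hlam) hx₂ hxy₂ hy₂ hedge₂ hxy₁.le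
      hy₁.le hedge₁.le
    rwa [le_inv_mul_iff₀ hlam] at this
  have hdet := h.det_eq
  rw [det_GoI, det_GoI, Fintype.card_fin, hx, hy] at hdet
  have hy₂0 : y₂ ^ 2 ≠ 0 := ((sq_nonneg x₂).trans_lt hxy₂).ne'
  obtain rfl : lam = 1 := mul_left_cancel₀
    (mul_ne_zero (pow_ne_zero 2 hlam.ne') (mul_ne_zero (pow_ne_zero 2 hx₂) hy₂0))
    (show lam ^ 2 * (x₂ ^ 2 * y₂ ^ 2) * lam = lam ^ 2 * (x₂ ^ 2 * y₂ ^ 2) * 1 by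
      linear_combination -4 * hdet)
  exact ⟨rfl, by simpa using hx, by simpa using hy⟩

theorem GoI_eq_of_le (h : IsScaledCongr g lam (GoI x₁ y₁) (GoI x₂ y₂)) (hlam : 0 < lam)
    (hxy₁ : x₁ ^ 2 ≤ y₁ ^ 2) (hy₁ : y₁ ^ 2 < 1) (hdiag₁ : (x₁ ^ 2 + y₁ ^ 2 + 1) / 4 ≤ x₁ ^ 2)
    (hx₂ : x₂ ≠ 0) (hxy₂ : x₂ ^ 2 ≤ y₂ ^ 2) (hy₂ : y₂ ^ 2 < 1)
    (hdiag₂ : (x₂ ^ 2 + y₂ ^ 2 + 1) / 4 ≤ x₂ ^ 2) :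
    lam = 1 ∧ x₁ ^ 2 = x₂ ^ 2 ∧ y₁ ^ 2 = y₂ ^ 2 := by
  have hs : (x₁ ^ 2 + y₁ ^ 2 + 1) / 4 = lam * ((x₂ ^ 2 + y₂ ^ 2 + 1) / 4) := by
    have hm := h.min_eq hlam (isLeast_latticeForm_GoI hxy₁ hy₁.le)
      (isLeast_latticeForm_GoI hxy₂ hy₂.le)
    rwa [min_eq_right hdiag₁, min_eq_right hdiag₂] at hm
  have hx : x₁ ^ 2 = lam * x₂ ^ 2 := by
    refine le_antisymm (h.GoI_x_sq_le_of_le hlam hxy₁ hy₁.le hdiag₁ hxy₂ hy₂.le hdiag₂) ?_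
    have := (h.symm hlam.ne').GoI_x_sq_le_of_le (inv_pos.2 hlam) hxy₂ hy₂.le hdiag₂ hxy₁ hy₁.le
      hdiag₁
    rwa [le_inv_mul_iff₀ hlam] at this
  have hdet := h.det_eq
  rw [det_GoI, det_GoI, Fintype.card_fin, hx] at hdet
  have hy : y₁ ^ 2 = lam ^ 2 * y₂ ^ 2 :=
    mul_left_cancel₀ (mul_ne_zero hlam.ne' (pow_ne_zero 2 hx₂)) (by linear_combination 4 * hdet)
  obtain rfl : lam = 1 := by
    rcases mul_eq_zero.1 (show (lam - 1) * (lam * y₂ ^ 2 - 1) = 0 by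
      linear_combination 4 * hs - hx - hy) with h1 | h1
    · linarith
    · have : y₁ ^ 2 = lam := by linear_combination hy + lam * h1
      nlinarith [mul_lt_mul_of_pos_left hy₂ hlam]
  exact ⟨rfl, by simpa using hx, by simpa using hy⟩

end IsScaledCongr

/-- If `0 < x₁ < y₁ < 1`, `0 < x₂ < y₂ < 1`, `g` is a `3×3` integer matrix
with determinant `±1`, and `λ > 0` satisfies `g · G_oI(x₁, y₁) · gᵀ = λ · G_oI(x₂, y₂)`,
then `x₁ = x₂`, `y₁ = y₂` and `λ = 1`. -/
theorem stmt16 (x₁ y₁ x₂ y₂ : ℝ) (hx₁ : 0 < x₁) (hxy₁ : x₁ < y₁) (hy₁ : y₁ < 1)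
    (hx₂ : 0 < x₂) (hxy₂ : x₂ < y₂) (hy₂ : y₂ < 1)
    (g : Matrix (Fin 3) (Fin 3) ℤ) (hg : g.det = 1 ∨ g.det = -1)
    (lam : ℝ) (hlam : 0 < lam)
    (heq : g.map (Int.cast : ℤ → ℝ) * GoI x₁ y₁ * (g.map (Int.cast : ℤ → ℝ))ᵀ =
      lam • GoI x₂ y₂) :
    x₁ = x₂ ∧ y₁ = y₂ ∧ lam = 1 := by
  have h : IsScaledCongr g lam (GoI x₁ y₁) (GoI x₂ y₂) := ⟨Int.isUnit_iff.2 hg, heq⟩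
  have hxy₁' : x₁ ^ 2 < y₁ ^ 2 := by gcongr
  have hxy₂' : x₂ ^ 2 < y₂ ^ 2 := by gcongr
  have hy₁' : y₁ ^ 2 < 1 := pow_lt_one₀ (hx₁.trans hxy₁).le hy₁ two_ne_zero
  have hy₂' : y₂ ^ 2 < 1 := pow_lt_one₀ (hx₂.trans hxy₂).le hy₂ two_ne_zero
  obtain ⟨rfl, hx, hy⟩ : lam = 1 ∧ x₁ ^ 2 = x₂ ^ 2 ∧ y₁ ^ 2 = y₂ ^ 2 := by
    rcases lt_or_ge (x₁ ^ 2) ((x₁ ^ 2 + y₁ ^ 2 + 1) / 4) with hedge₁ | hdiag₁ <;>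
      rcases lt_or_ge (x₂ ^ 2) ((x₂ ^ 2 + y₂ ^ 2 + 1) / 4) with hedge₂ | hdiag₂
    · exact h.GoI_eq_of_lt hlam hx₁.ne' hxy₁' hy₁' hedge₁ hx₂.ne' hxy₂' hy₂' hedge₂
    · exact absurd h
        (not_isScaledCongr_GoI_of_lt_of_le hlam hxy₁' hy₁' hedge₁ hxy₂'.le hy₂'.le hdiag₂)
    · exact absurd (h.symm hlam.ne')
        (not_isScaledCongr_GoI_of_lt_of_le (inv_pos.2 hlam) hxy₂' hy₂' hedge₂ hxy₁'.le hy₁'.le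
          hdiag₁)
    · exact h.GoI_eq_of_le hlam hxy₁'.le hy₁' hdiag₁ hx₂.ne' hxy₂'.le hy₂' hdiag₂
  exact ⟨(sq_eq_sq₀ hx₁.le hx₂.le).1 hx,
    (sq_eq_sq₀ (hx₁.trans hxy₁).le (hx₂.trans hxy₂).le).1 hy, rfl⟩
end

section
/- Let SC be the set of triples (g₁, g₂, g₃) ∈ ℤ³ such that each gᵢ is squarefree, the gᵢ are pairwise distinct, gcd(gᵢ, gⱼ) = 1 for all i ≠ j, and at most one of g₁, g₂, g₃ is negative. Let D be the set of triples (D₁, D₂, D₃) ∈ ℤ³ such that each Dᵢ is squarefree, Dᵢ ∉ {0, 1}, and for every permutation {i, j, k} = {1, 2, 3} one has Dᵢ = Dⱼ·D_k / gcd(Dⱼ, D_k)², where gcd denotes the positive greatest common divisor. Then the map (g₁, g₂, g₃) ↦ (g₂g₃, g₁g₃, g₁g₂) is a bijection from SC onto D. -/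
/-!
For a strongly carefree triple, `gcd (g₁ g₃, g₁ g₂) = |g₁| · gcd (g₃, g₂) = |g₁|`, which gives
the gcd relations and recovers `g` from its image up to a global sign; a global sign change is
excluded because `g` and `-g` together would have three negative entries.

Conversely, put `a = gcd (D₂, D₃)`, `b = gcd (D₁, D₃)`, `c = gcd (D₁, D₂)`. Multiplying two of
the relations gives `|D₁| = b c`, `|D₂| = a c`, `|D₃| = a b`, and `D₁ a² = D₂ D₃` forces either
all `Dᵢ` positive, giving the preimage `(a, b, c)`, or exactly one, say `Dᵢ`, positive, giving
`(a, b, c)` with its `i`-th entry negated. Squarefreeness, coprimality and distinctness of the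
`gᵢ` are read off from the products `gⱼ gₖ = Dᵢ` being squarefree and different from `1`.
-/

def IsStronglyCarefree (g₁ g₂ g₃ : ℤ) : Prop :=
  Squarefree g₁ ∧ Squarefree g₂ ∧ Squarefree g₃ ∧
    g₁ ≠ g₂ ∧ g₁ ≠ g₃ ∧ g₂ ≠ g₃ ∧
    Int.gcd g₁ g₂ = 1 ∧ Int.gcd g₁ g₃ = 1 ∧ Int.gcd g₂ g₃ = 1 ∧
    ¬(g₁ < 0 ∧ g₂ < 0) ∧ ¬(g₁ < 0 ∧ g₃ < 0) ∧ ¬(g₂ < 0 ∧ g₃ < 0)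

/-- `Dᵢ = Dⱼ Dₖ / gcd (Dⱼ, Dₖ)²`, multiplied out. -/
def IsSquarefreeProductTriple (D₁ D₂ D₃ : ℤ) : Prop :=
  Squarefree D₁ ∧ Squarefree D₂ ∧ Squarefree D₃ ∧
    D₁ ≠ 0 ∧ D₁ ≠ 1 ∧ D₂ ≠ 0 ∧ D₂ ≠ 1 ∧ D₃ ≠ 0 ∧ D₃ ≠ 1 ∧
    D₁ * (Int.gcd D₂ D₃ : ℤ) ^ 2 = D₂ * D₃ ∧
    D₂ * (Int.gcd D₁ D₃ : ℤ) ^ 2 = D₁ * D₃ ∧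
    D₃ * (Int.gcd D₁ D₂ : ℤ) ^ 2 = D₁ * D₂

theorem Int.squarefree_mul_iff_gcd_eq_one {a b : ℤ} :
    Squarefree (a * b) ↔ Int.gcd a b = 1 ∧ Squarefree a ∧ Squarefree b := by
  rw [squarefree_mul_iff, isRelPrime_iff_isCoprime, Int.isCoprime_iff_gcd_eq_one]

theorem Int.mul_eq_one_iff_eq_of_gcd_eq_one {a b : ℤ} (h : Int.gcd a b = 1) :
    a * b = 1 ↔ a = b := by
  constructor
  · intro hab
    rcases Int.eq_one_or_neg_one_of_mul_eq_one' hab with ⟨rfl, rfl⟩ | ⟨rfl, rfl⟩ <;> rfl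
  · rintro rfl
    rw [Int.gcd_self] at h
    rw [← Int.natAbs_mul_self', h]
    rfl

theorem Int.mul_gcd_mul_sq {x y z : ℤ} (h : Int.gcd y z = 1) :
    y * z * (Int.gcd (x * z) (x * y) : ℤ) ^ 2 = x * z * (x * y) := by
  rw [Int.gcd_mul_left, Int.gcd_comm, h, mul_one, Int.natCast_natAbs, sq_abs]
  ring

theorem abs_eq_mul_of_mul_sq_eq {R : Type*} [CommRing R] [LinearOrder R] [IsStrictOrderedRing R]
    {x y z a b : R} (hx : x ≠ 0) (hy : y ≠ 0) (ha : 0 ≤ a) (hb : 0 ≤ b)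
    (hxa : x * a ^ 2 = y * z) (hyb : y * b ^ 2 = x * z) : |z| = a * b := by
  have hsq : (a * b) ^ 2 = z ^ 2 :=
    mul_left_cancel₀ (mul_ne_zero hx hy) (by linear_combination b ^ 2 * y * hxa + y * z * hyb)
  rw [← abs_of_nonneg (mul_nonneg ha hb), ← (sq_eq_sq_iff_abs_eq_abs _ _).mp hsq.symm]

theorem exists_mul_eq_of_abs_eq {R : Type*} [CommRing R] [LinearOrder R] [IsStrictOrderedRing R]
    {a b c D₁ D₂ D₃ : R} (ha : 0 < a) (hb : 0 ≤ b) (hc : 0 ≤ c)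
    (h₂ : |D₂| = a * c) (h₃ : |D₃| = a * b) (h₁ : D₁ * a ^ 2 = D₂ * D₃) :
    ∃ g₁ g₂ g₃ : R, g₂ * g₃ = D₁ ∧ g₁ * g₃ = D₂ ∧ g₁ * g₂ = D₃ ∧
      ¬(g₁ < 0 ∧ g₂ < 0) ∧ ¬(g₁ < 0 ∧ g₃ < 0) ∧ ¬(g₂ < 0 ∧ g₃ < 0) := by
  have hD₁ {g₂ g₃ : R} (h : D₂ * D₃ = g₂ * g₃ * a ^ 2) : g₂ * g₃ = D₁ :=
    mul_right_cancel₀ (pow_ne_zero 2 ha.ne') (h₁.trans h).symm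
  rcases (abs_eq (by positivity)).mp h₂ with rfl | rfl <;>
    rcases (abs_eq (by positivity)).mp h₃ with rfl | rfl
  · exact ⟨a, b, c, hD₁ (by ring), rfl, rfl, by grind, by grind, by grind⟩
  · exact ⟨a, -b, c, hD₁ (by ring), rfl, by ring, by grind, by grind, by grind⟩
  · exact ⟨a, b, -c, hD₁ (by ring), by ring, rfl, by grind, by grind, by grind⟩
  · exact ⟨-a, b, c, hD₁ (by ring), by ring, by ring, by grind, by grind, by grind⟩

section

variable {g₁ g₂ g₃ : ℤ}

theorem isStronglyCarefree_iff : IsStronglyCarefree g₁ g₂ g₃ ↔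
    Squarefree (g₂ * g₃) ∧ Squarefree (g₁ * g₃) ∧ Squarefree (g₁ * g₂) ∧
      g₂ * g₃ ≠ 1 ∧ g₁ * g₃ ≠ 1 ∧ g₁ * g₂ ≠ 1 ∧
      ¬(g₁ < 0 ∧ g₂ < 0) ∧ ¬(g₁ < 0 ∧ g₃ < 0) ∧ ¬(g₂ < 0 ∧ g₃ < 0) := by
  simp only [IsStronglyCarefree, Int.squarefree_mul_iff_gcd_eq_one]
  constructor
  · rintro ⟨s₁, s₂, s₃, n₁₂, n₁₃, n₂₃, c₁₂, c₁₃, c₂₃, hsign⟩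
    exact ⟨⟨c₂₃, s₂, s₃⟩, ⟨c₁₃, s₁, s₃⟩, ⟨c₁₂, s₁, s₂⟩,
      (Int.mul_eq_one_iff_eq_of_gcd_eq_one c₂₃).not.mpr n₂₃,
      (Int.mul_eq_one_iff_eq_of_gcd_eq_one c₁₃).not.mpr n₁₃,
      (Int.mul_eq_one_iff_eq_of_gcd_eq_one c₁₂).not.mpr n₁₂, hsign⟩
  · rintro ⟨⟨c₂₃, s₂, s₃⟩, ⟨c₁₃, s₁, -⟩, ⟨c₁₂, -, -⟩, n₂₃, n₁₃, n₁₂, hsign⟩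
    exact ⟨s₁, s₂, s₃, (Int.mul_eq_one_iff_eq_of_gcd_eq_one c₁₂).not.mp n₁₂,
      (Int.mul_eq_one_iff_eq_of_gcd_eq_one c₁₃).not.mp n₁₃,
      (Int.mul_eq_one_iff_eq_of_gcd_eq_one c₂₃).not.mp n₂₃, c₁₂, c₁₃, c₂₃, hsign⟩

theorem IsStronglyCarefree.isSquarefreeProductTriple (h : IsStronglyCarefree g₁ g₂ g₃) :
    IsSquarefreeProductTriple (g₂ * g₃) (g₁ * g₃) (g₁ * g₂) := by
  obtain ⟨s₂₃, s₁₃, s₁₂, n₂₃, n₁₃, n₁₂, -⟩ := isStronglyCarefree_iff.mp h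
  obtain ⟨-, -, -, -, -, -, c₁₂, c₁₃, c₂₃, -⟩ := h
  refine ⟨s₂₃, s₁₃, s₁₂, s₂₃.ne_zero, n₂₃, s₁₃.ne_zero, n₁₃, s₁₂.ne_zero, n₁₂,
    Int.mul_gcd_mul_sq c₂₃, ?_, ?_⟩
  · simpa only [mul_comm g₂ g₁] using Int.mul_gcd_mul_sq (x := g₂) c₁₃
  · simpa only [mul_comm g₃ g₁, mul_comm g₃ g₂] using Int.mul_gcd_mul_sq (x := g₃) c₁₂

theorem IsStronglyCarefree.eq_of_mul_eq {k₁ k₂ k₃ : ℤ} (hg : IsStronglyCarefree g₁ g₂ g₃)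
    (hk : IsStronglyCarefree k₁ k₂ k₃) (h₂ : g₁ * g₃ = k₁ * k₃) (h₃ : g₁ * g₂ = k₁ * k₂) :
    g₁ = k₁ ∧ g₂ = k₂ ∧ g₃ = k₃ := by
  obtain ⟨sg₁, -, -, -, -, -, -, -, cg₂₃, hgsign⟩ := hg
  obtain ⟨sk₁, sk₂, sk₃, -, -, -, -, -, ck₂₃, hksign⟩ := hk
  have habs : g₁.natAbs = k₁.natAbs := by
    simpa [Int.gcd_mul_left, cg₂₃, ck₂₃] using congrArg₂ Int.gcd h₃ h₂
  rcases Int.natAbs_eq_natAbs_iff.mp habs with rfl | rfl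
  · exact ⟨rfl, mul_left_cancel₀ sg₁.ne_zero h₃, mul_left_cancel₀ sg₁.ne_zero h₂⟩
  · have hg₂ : g₂ = -k₂ := mul_left_cancel₀ sk₁.ne_zero (by linear_combination -h₃)
    have hg₃ : g₃ = -k₃ := mul_left_cancel₀ sk₁.ne_zero (by linear_combination -h₂)
    have := sk₁.ne_zero
    have := sk₂.ne_zero
    have := sk₃.ne_zero
    omega

end

theorem IsSquarefreeProductTriple.exists_isStronglyCarefree {D₁ D₂ D₃ : ℤ}
    (h : IsSquarefreeProductTriple D₁ D₂ D₃) :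
    ∃ g₁ g₂ g₃, IsStronglyCarefree g₁ g₂ g₃ ∧ g₂ * g₃ = D₁ ∧ g₁ * g₃ = D₂ ∧ g₁ * g₂ = D₃ := by
  obtain ⟨s₁, s₂, s₃, z₁, n₁, z₂, n₂, z₃, n₃, e₁, e₂, e₃⟩ := h
  have ha : 0 < (Int.gcd D₂ D₃ : ℤ) := by exact_mod_cast Int.gcd_pos_of_ne_zero_left _ z₂
  obtain ⟨g₁, g₂, g₃, rfl, rfl, rfl, hsign⟩ := exists_mul_eq_of_abs_eq ha (by positivity)
    (by positivity) (abs_eq_mul_of_mul_sq_eq z₁ z₃ ha.le (by positivity)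
      (e₁.trans (mul_comm _ _)) e₃) (abs_eq_mul_of_mul_sq_eq z₁ z₂ ha.le (by positivity) e₁ e₂) e₁
  exact ⟨g₁, g₂, g₃, isStronglyCarefree_iff.mpr ⟨s₁, s₂, s₃, n₁, n₂, n₃, hsign⟩, rfl, rfl, rfl⟩

/-- The map `(g₁, g₂, g₃) ↦ (g₂g₃, g₁g₃, g₁g₂)` is a bijection from the
set `SC` of `∗`-strongly carefree triples (squarefree, pairwise distinct, pairwise
coprime, at most one negative) onto the set `D` of triples of squarefree integers
`Dᵢ ∉ {0, 1}` with `Dᵢ·gcd(Dⱼ, D_k)² = Dⱼ·D_k` for every permutation `{i,j,k} = {1,2,3}`. -/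
theorem stmt17 :
    Set.BijOn (fun g : ℤ × ℤ × ℤ => (g.2.1 * g.2.2, g.1 * g.2.2, g.1 * g.2.1))
      {g : ℤ × ℤ × ℤ |
        Squarefree g.1 ∧ Squarefree g.2.1 ∧ Squarefree g.2.2 ∧
        g.1 ≠ g.2.1 ∧ g.1 ≠ g.2.2 ∧ g.2.1 ≠ g.2.2 ∧
        Int.gcd g.1 g.2.1 = 1 ∧ Int.gcd g.1 g.2.2 = 1 ∧ Int.gcd g.2.1 g.2.2 = 1 ∧
        ¬(g.1 < 0 ∧ g.2.1 < 0) ∧ ¬(g.1 < 0 ∧ g.2.2 < 0) ∧ ¬(g.2.1 < 0 ∧ g.2.2 < 0)}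
      {D : ℤ × ℤ × ℤ |
        Squarefree D.1 ∧ Squarefree D.2.1 ∧ Squarefree D.2.2 ∧
        D.1 ≠ 0 ∧ D.1 ≠ 1 ∧ D.2.1 ≠ 0 ∧ D.2.1 ≠ 1 ∧ D.2.2 ≠ 0 ∧ D.2.2 ≠ 1 ∧
        D.1 * (Int.gcd D.2.1 D.2.2 : ℤ) ^ 2 = D.2.1 * D.2.2 ∧
        D.2.1 * (Int.gcd D.1 D.2.2 : ℤ) ^ 2 = D.1 * D.2.2 ∧
        D.2.2 * (Int.gcd D.1 D.2.1 : ℤ) ^ 2 = D.1 * D.2.1} := by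
  refine ⟨fun g (hg : IsStronglyCarefree _ _ _) => hg.isSquarefreeProductTriple, ?_, ?_⟩
  · rintro ⟨g₁, g₂, g₃⟩ (hg : IsStronglyCarefree _ _ _) ⟨k₁, k₂, k₃⟩
      (hk : IsStronglyCarefree _ _ _) h
    simp only [Prod.mk.injEq] at h
    obtain ⟨-, h₂, h₃⟩ := h
    obtain ⟨rfl, rfl, rfl⟩ := hg.eq_of_mul_eq hk h₂ h₃
    rfl
  · rintro ⟨D₁, D₂, D₃⟩ (hD : IsSquarefreeProductTriple _ _ _)
    obtain ⟨g₁, g₂, g₃, hg, rfl, rfl, rfl⟩ := hD.exists_isStronglyCarefree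
    exact ⟨(g₁, g₂, g₃), hg, rfl⟩
end

section
/- Let K be a subfield of ℂ that is a number field of degree 4 over ℚ, and let x, y ∈ K and nonzero integers m, n with x² = m and y² = n (as elements of K). Then: (1) the sum over all four field embeddings σ : K → ℂ of σ(x)·conj(σ(x)) equals 4·|m|; and (2) if m·n is not the square of an integer, then the sum over all four field embeddings σ : K → ℂ of σ(x)·conj(σ(y)) equals 0. -/
/-!
Every embedding sends `x` to a square root of `m`, so `σ x · conj (σ x) = |σ x|² = |m|` and (1)
follows by counting embeddings. Since `σ y` is real or purely imaginary, `conj (σ y) = sign n · σ y`,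
so the sum in (2) is `sign n · Tr (x y)`. As `(x y)² = m n` is not a rational square, the minimal
polynomial of `x y` is `X² - m n`, whose `X`-coefficient vanishes, hence `Tr (x y) = 0`.
-/

open Polynomial

theorem Algebra.trace_eq_zero_of_sq_eq_algebraMap {F L : Type*} [Field F] [Field L] [Algebra F L]
    [FiniteDimensional F L] {z : L} {d : F} (hz : z ^ 2 = algebraMap F L d) (hd : ¬IsSquare d) :
    Algebra.trace F L z = 0 := by
  have hirr : Irreducible (X ^ 2 - C d) :=
    X_pow_sub_C_irreducible_of_prime Nat.prime_two fun b hb => hd ⟨b, by rw [← hb, sq]⟩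
  have hmin : X ^ 2 - C d = minpoly F z :=
    minpoly.eq_of_irreducible_of_monic hirr (by simp [hz]) (monic_X_pow_sub_C d two_ne_zero)
  rw [trace_eq_finrank_mul_minpoly_nextCoeff, ← hmin, nextCoeff_of_natDegree_pos (by simp)]
  simp

theorem Complex.mul_conj_eq_abs_of_sq_eq_intCast {z : ℂ} {a : ℤ} (hz : z ^ 2 = a) :
    z * (starRingEnd ℂ) z = (|a| : ℤ) := by
  have h : ‖z‖ ^ 2 = |(a : ℝ)| := by rw [← norm_pow, hz, Complex.norm_intCast]
  rw [Complex.mul_conj, ← Complex.sq_norm, h]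
  norm_cast

theorem Complex.conj_eq_sign_mul_of_sq_eq_intCast {z : ℂ} {a : ℤ} (hz : z ^ 2 = a) :
    (starRingEnd ℂ) z = a.sign * z := by
  rcases eq_or_ne z 0 with rfl | hz0
  · simp
  apply mul_left_cancel₀ hz0
  rw [mul_conj_eq_abs_of_sq_eq_intCast hz, ← mul_assoc, mul_comm z, mul_assoc, ← sq, hz]
  exact_mod_cast (Int.sign_mul_self_eq_abs a).symm

theorem map_sq_eq_intCast {F K L : Type*} [Ring K] [Ring L] [FunLike F K L] [RingHomClass F K L]
    (σ : F) {z : K} {a : ℤ} (hz : z ^ 2 = a) : σ z ^ 2 = a := by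
  rw [← map_pow, hz, map_intCast]

theorem stmt18_general (K : IntermediateField ℚ ℂ) [FiniteDimensional ℚ K]
    (hdeg : Module.finrank ℚ K = 4) (x y : K) (m n : ℤ)
    (hx : x ^ 2 = (m : K)) (hy : y ^ 2 = (n : K)) :
    (∑ σ : K →ₐ[ℚ] ℂ, σ x * (starRingEnd ℂ) (σ x)) = ((4 * |m| : ℤ) : ℂ) ∧
    (¬(∃ k : ℤ, m * n = k ^ 2) →
      (∑ σ : K →ₐ[ℚ] ℂ, σ x * (starRingEnd ℂ) (σ y)) = 0) := by
  constructor
  · simp_rw [fun σ : K →ₐ[ℚ] ℂ =>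
      Complex.mul_conj_eq_abs_of_sq_eq_intCast (map_sq_eq_intCast σ hx)]
    rw [Finset.sum_const, Finset.card_univ, AlgHom.card, hdeg]
    push_cast
    ring
  · intro hmn
    have hxy : (x * y) ^ 2 = algebraMap ℚ K ((m * n : ℤ) : ℚ) := by
      rw [mul_pow, hx, hy]
      push_cast
      simp
    have hmn_sq : ¬IsSquare ((m * n : ℤ) : ℚ) := by
      rw [Rat.isSquare_intCast_iff]
      rintro ⟨k, hk⟩
      exact hmn ⟨k, hk.trans (sq k).symm⟩
    calc ∑ σ : K →ₐ[ℚ] ℂ, σ x * (starRingEnd ℂ) (σ y)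
        = n.sign * ∑ σ : K →ₐ[ℚ] ℂ, σ (x * y) := by
          rw [Finset.mul_sum]
          refine Finset.sum_congr rfl fun σ _ => ?_
          rw [Complex.conj_eq_sign_mul_of_sq_eq_intCast (map_sq_eq_intCast σ hy), map_mul]
          ring
      _ = n.sign * algebraMap ℚ ℂ (Algebra.trace ℚ K (x * y)) := by
          rw [trace_eq_sum_embeddings ℂ]
      _ = 0 := by
          rw [Algebra.trace_eq_zero_of_sq_eq_algebraMap hxy hmn_sq, map_zero, mul_zero]

/-- Let `K ⊆ ℂ` be a number field of degree 4 over `ℚ`, and `x, y ∈ K`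
with `x² = m`, `y² = n` for nonzero integers `m, n`. Then (1)
`∑_σ σ(x)·conj(σ(x)) = 4|m|`, the sum over the four embeddings `σ : K → ℂ`; and (2) if
`m·n` is not the square of an integer, then `∑_σ σ(x)·conj(σ(y)) = 0`. -/
theorem stmt18 (K : IntermediateField ℚ ℂ) [FiniteDimensional ℚ K]
    (hdeg : Module.finrank ℚ K = 4) (x y : K) (m n : ℤ) (hm : m ≠ 0) (hn : n ≠ 0)
    (hx : x ^ 2 = (m : K)) (hy : y ^ 2 = (n : K)) :
    (∑ σ : K →ₐ[ℚ] ℂ, σ x * (starRingEnd ℂ) (σ x)) = ((4 * |m| : ℤ) : ℂ) ∧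
    (¬(∃ k : ℤ, m * n = k ^ 2) →
      (∑ σ : K →ₐ[ℚ] ℂ, σ x * (starRingEnd ℂ) (σ y)) = 0) :=
  stmt18_general K hdeg x y m n hx hy
end

section
/- Let a, c be real numbers with 0 < c ≤ √2·a, and let L ⊆ ℝ³ be the additive subgroup (ℤ-span) generated by w₁ = (c, 0, 0), w₂ = (0, a, 0), w₃ = (0, 0, a), and w₄ = (c/2, a/2, a/2). Define v₀ = (c/2, a/2, a/2), v₁ = (−c/2, −a/2, a/2), v₂ = (c/2, −a/2, −a/2), v₃ = (−c/2, a/2, −a/2). Then v₀ + v₁ + v₂ + v₃ = 0, the triple (v₁, v₂, v₃) is a ℤ-basis of L (i.e. L is the ℤ-span of v₁, v₂, v₃ and they are ℤ-linearly independent), and vᵢ · vⱼ ≤ 0 for all i ≠ j, where · is the standard inner product on ℝ³. In other words, (v₀, v₁, v₂, v₃) is an obtuse superbase of the body-centered tetragonal lattice L. -/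
/-- The vectors `v₀ = (c/2, a/2, a/2)`, `v₁ = (−c/2, −a/2, a/2)`,
`v₂ = (c/2, −a/2, −a/2)`, `v₃ = (−c/2, a/2, −a/2)`. -/
noncomputable def tIvec (a c : ℝ) : Fin 4 → Fin 3 → ℝ :=
  ![![c / 2, a / 2, a / 2], ![-c / 2, -a / 2, a / 2],
    ![c / 2, -a / 2, -a / 2], ![-c / 2, a / 2, -a / 2]]

/-!
Every generator of either list is a signed sum of at most three generators of the other, e.g.
`(c, 0, 0) = -v₁ - v₃` and `v₁ = w₄ - w₁ - w₂`, so both lists span the same lattice; and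
`det (v₁, v₂, v₃) = -a²c/2 ≠ 0`. Of the six products `vᵢ · vⱼ`, four equal `-c²/4` and two equal
`(c² - 2a²)/4`, so the superbase is obtuse exactly when `c² ≤ 2a²`, i.e. when `c ≤ √2·a`.
-/

namespace tIvec

variable (a c : ℝ)

theorem sum_eq_zero : tIvec a c 0 + tIvec a c 1 + tIvec a c 2 + tIvec a c 3 = 0 := by
  ext k
  fin_cases k <;> simp [tIvec] <;> ring

open Submodule in
theorem span_eq :
    span ℤ {tIvec a c 1, tIvec a c 2, tIvec a c 3} =
      span ℤ {![c, 0, 0], ![0, a, 0], ![0, 0, a], ![c / 2, a / 2, a / 2]} := by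
  set v := tIvec a c
  set w₁ : Fin 3 → ℝ := ![c, 0, 0]
  set w₂ : Fin 3 → ℝ := ![0, a, 0]
  set w₃ : Fin 3 → ℝ := ![0, 0, a]
  set w₄ : Fin 3 → ℝ := ![c / 2, a / 2, a / 2]
  obtain ⟨hv₁, hv₂, hv₃, hw₁, hw₂, hw₃, hw₄⟩ :
      v 1 = w₄ - w₁ - w₂ ∧ v 2 = w₄ - w₂ - w₃ ∧ v 3 = w₄ - w₁ - w₃ ∧
        w₁ = -v 1 - v 3 ∧ w₂ = -v 1 - v 2 ∧ w₃ = -v 2 - v 3 ∧ w₄ = -v 1 - v 2 - v 3 := by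
    refine ⟨?_, ?_, ?_, ?_, ?_, ?_, ?_⟩ <;> ext k <;> fin_cases k <;>
      simp [v, w₁, w₂, w₃, w₄, tIvec] <;> ring
  have mem_w {x} (hx : x ∈ ({w₁, w₂, w₃, w₄} : Set _)) : x ∈ span ℤ {w₁, w₂, w₃, w₄} :=
    subset_span hx
  have mem_v {x} (hx : x ∈ ({v 1, v 2, v 3} : Set _)) : x ∈ span ℤ {v 1, v 2, v 3} :=
    subset_span hx
  apply span_eq_span
  · rintro x (rfl | rfl | rfl)
    · rw [hv₁]; exact sub_mem (sub_mem (mem_w (by simp)) (mem_w (by simp))) (mem_w (by simp))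
    · rw [hv₂]; exact sub_mem (sub_mem (mem_w (by simp)) (mem_w (by simp))) (mem_w (by simp))
    · rw [hv₃]; exact sub_mem (sub_mem (mem_w (by simp)) (mem_w (by simp))) (mem_w (by simp))
  · rintro x (rfl | rfl | rfl | rfl)
    · rw [hw₁]; exact sub_mem (neg_mem (mem_v (by simp))) (mem_v (by simp))
    · rw [hw₂]; exact sub_mem (neg_mem (mem_v (by simp))) (mem_v (by simp))
    · rw [hw₃]; exact sub_mem (neg_mem (mem_v (by simp))) (mem_v (by simp))
    · rw [hw₄]
      exact sub_mem (sub_mem (neg_mem (mem_v (by simp))) (mem_v (by simp))) (mem_v (by simp))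

theorem det_eq : (Matrix.of ![tIvec a c 1, tIvec a c 2, tIvec a c 3]).det = -(a ^ 2 * c / 2) := by
  simp only [Matrix.det_fin_three, Matrix.of_apply, tIvec, Matrix.cons_val', Matrix.cons_val,
    Matrix.cons_val_zero, Matrix.cons_val_one, Matrix.cons_val_fin_one]
  ring

theorem linearIndependent (ha : a ≠ 0) (hc : c ≠ 0) :
    LinearIndependent ℤ ![tIvec a c 1, tIvec a c 2, tIvec a c 3] := by
  have hdet : (Matrix.of ![tIvec a c 1, tIvec a c 2, tIvec a c 3]).det ≠ 0 := by
    rw [det_eq]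
    simp [ha, hc]
  exact (Matrix.linearIndependent_rows_of_det_ne_zero hdet).restrict_scalars' ℤ

theorem dot_nonpos (h : c ^ 2 ≤ 2 * a ^ 2) (i j : Fin 4) (hij : i ≠ j) :
    ∑ k : Fin 3, tIvec a c i k * tIvec a c j k ≤ 0 := by
  fin_cases i <;> fin_cases j <;> simp [tIvec, Fin.sum_univ_three] at hij ⊢ <;>
    nlinarith [sq_nonneg c]

end tIvec

/-- For `0 < c ≤ √2·a` and `L ⊆ ℝ³` the ℤ-span of
`w₁ = (c,0,0)`, `w₂ = (0,a,0)`, `w₃ = (0,0,a)`, `w₄ = (c/2, a/2, a/2)`, the quadruple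
`(v₀, v₁, v₂, v₃)` above is an obtuse superbase of the body-centered tetragonal lattice
`L`: `v₀ + v₁ + v₂ + v₃ = 0`, `(v₁, v₂, v₃)` is a ℤ-basis of `L`, and `vᵢ · vⱼ ≤ 0`
for all `i ≠ j`. -/
theorem stmt19 (a c : ℝ) (hc : 0 < c) (hca : c ≤ Real.sqrt 2 * a) :
    (tIvec a c 0 + tIvec a c 1 + tIvec a c 2 + tIvec a c 3 = 0) ∧
    (Submodule.span ℤ {tIvec a c 1, tIvec a c 2, tIvec a c 3} =
      Submodule.span ℤ
        {![c, 0, 0], ![0, a, 0], ![0, 0, a], ![c / 2, a / 2, a / 2]}) ∧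
    LinearIndependent ℤ ![tIvec a c 1, tIvec a c 2, tIvec a c 3] ∧
    (∀ i j : Fin 4, i ≠ j → ∑ k : Fin 3, tIvec a c i k * tIvec a c j k ≤ 0) := by
  have ha : 0 < a := pos_of_mul_pos_right (hc.trans_le hca) (Real.sqrt_nonneg 2)
  have hc2 : c ^ 2 ≤ 2 * a ^ 2 := by
    calc c ^ 2 ≤ (Real.sqrt 2 * a) ^ 2 := pow_le_pow_left₀ hc.le hca 2
      _ = 2 * a ^ 2 := by rw [mul_pow, Real.sq_sqrt zero_le_two]
  exact ⟨tIvec.sum_eq_zero a c, tIvec.span_eq a c, tIvec.linearIndependent a c ha.ne' hc.ne',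
    tIvec.dot_nonpos a c hc2⟩
end
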